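/- arXiv:1203.0803 — 3 statements merged into one kernel-verified Lean document; each statement's English description precedes it below -/
import Mathlib

section
/- Let A and B be finite-dimensional subspaces of a Hilbert space W with dim A = dim B. Then δ(A,B) = δ(B,A), where δ(A,B) = sup_{x ∈ A, ‖x‖=1} dist(x,B). Consequently gap(A,B) := max(δ(A,B), δ(B,A)) equals δ(A,B). -/
open scoped InnerProductSpace

/-- `δ(A,B) = sup_{x ∈ A, ‖x‖=1} ‖x - P_B x‖`. -/
noncomputable def subspaceDelta {W : Type*} [NormedAddCommGroup W] [InnerProductSpace ℝ W]
    (A B : Submodule ℝ W) [B.HasOrthogonalProjection] : ℝ :=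
  sSup {r : ℝ | ∃ x ∈ A, ‖x‖ = 1 ∧ r = ‖x - (B.orthogonalProjectionOnto x : W)‖}

/-!
By Pythagoras `δ(A,B)² = 1 - c²`, where `c` is the least value of `‖P_B x‖` on the unit sphere
of `A`. The restrictions `P_A : B → A` and `P_B : A → B` are adjoint to each other, and between
spaces of equal finite dimension an operator and its adjoint have the same least singular value:
if `c ‖y‖ ≤ ‖T y‖` with `c > 0` then `T` is bijective, and for `x = T y`,
`c ‖x‖² = c ⟪T† x, y⟫ ≤ ‖T† x‖ · c ‖y‖ ≤ ‖T† x‖ ‖x‖`.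
-/

namespace ContinuousLinearMap

theorem injective_of_mul_norm_le_norm_apply {𝕜 E F : Type*} [NontriviallyNormedField 𝕜]
    [NormedAddCommGroup E] [NormedSpace 𝕜 E] [NormedAddCommGroup F] [NormedSpace 𝕜 F]
    {T : E →L[𝕜] F} {c : ℝ} (hc : 0 < c)
    (h : ∀ x, c * ‖x‖ ≤ ‖T x‖) : Function.Injective T :=
  (injective_iff_map_eq_zero T).2 fun x hx =>
    norm_le_zero_iff.1 <| nonpos_of_mul_nonpos_right (by simpa [hx] using h x) hc

theorem mul_norm_le_norm_adjoint_apply {E F : Type*} [NormedAddCommGroup E]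
    [InnerProductSpace ℝ E] [NormedAddCommGroup F] [InnerProductSpace ℝ F]
    [FiniteDimensional ℝ E] [FiniteDimensional ℝ F] (hdim : Module.finrank ℝ E = Module.finrank ℝ F)
    {T : E →L[ℝ] F} {c : ℝ} (h : ∀ x, c * ‖x‖ ≤ ‖T x‖) (y : F) : c * ‖y‖ ≤ ‖T.adjoint y‖ := by
  rcases le_or_gt c 0 with hc | hc
  · exact (mul_nonpos_of_nonpos_of_nonneg hc (norm_nonneg y)).trans (norm_nonneg _)
  obtain ⟨x, rfl⟩ : ∃ x, T x = y :=
    (LinearMap.injective_iff_surjective_of_finrank_eq_finrank hdim).1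
      (injective_of_mul_norm_le_norm_apply hc h) y
  have hinner : ‖T x‖ ^ 2 ≤ ‖T.adjoint (T x)‖ * ‖x‖ := by
    rw [← real_inner_self_eq_norm_sq, ← adjoint_inner_left]
    exact real_inner_le_norm _ _
  rcases (norm_nonneg (T x)).eq_or_lt with h0 | hpos
  · rw [← h0, mul_zero]
    exact norm_nonneg _
  refine le_of_mul_le_mul_right ?_ hpos
  calc c * ‖T x‖ * ‖T x‖ = c * ‖T x‖ ^ 2 := by ring
    _ ≤ c * (‖T.adjoint (T x)‖ * ‖x‖) := by gcongr
    _ = ‖T.adjoint (T x)‖ * (c * ‖x‖) := by ring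
    _ ≤ ‖T.adjoint (T x)‖ * ‖T x‖ := by gcongr; exact h x

end ContinuousLinearMap

namespace Submodule

variable {W : Type*} [NormedAddCommGroup W] [InnerProductSpace ℝ W]

theorem norm_sub_starProjection_sq (K : Submodule ℝ W) [K.HasOrthogonalProjection] (x : W) :
    ‖x - K.starProjection x‖ ^ 2 = ‖x‖ ^ 2 - ‖K.starProjection x‖ ^ 2 := by
  rw [K.norm_sq_eq_add_norm_sq_starProjection x, starProjection_orthogonal']
  simp

theorem norm_sub_starProjection_le_norm (K : Submodule ℝ W) [K.HasOrthogonalProjection]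
    (x : W) : ‖x - K.starProjection x‖ ≤ ‖x‖ := by
  rw [← pow_le_pow_iff_left₀ (norm_nonneg _) (norm_nonneg _) two_ne_zero,
    norm_sub_starProjection_sq]
  linarith [sq_nonneg ‖K.starProjection x‖]

end Submodule

section subspaceDelta

variable {W : Type*} [NormedAddCommGroup W] [InnerProductSpace ℝ W] (A B : Submodule ℝ W)
  [B.HasOrthogonalProjection]

theorem norm_sub_starProjection_le_subspaceDelta {x : W} (hx : x ∈ A) (hx1 : ‖x‖ = 1) :
    ‖x - B.starProjection x‖ ≤ subspaceDelta A B :=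
  le_csSup ⟨1, by rintro _ ⟨y, -, hy, rfl⟩; exact hy ▸ B.norm_sub_starProjection_le_norm y⟩
    ⟨x, hx, hx1, rfl⟩

theorem subspaceDelta_le {d : ℝ} (hd : 0 ≤ d)
    (h : ∀ x ∈ A, ‖x‖ = 1 → ‖x - B.starProjection x‖ ≤ d) : subspaceDelta A B ≤ d :=
  Real.sSup_le (by rintro _ ⟨x, hx, hx1, rfl⟩; exact h x hx hx1) hd

theorem subspaceDelta_nonneg : 0 ≤ subspaceDelta A B :=
  Real.sSup_nonneg (by rintro _ ⟨x, -, -, rfl⟩; exact norm_nonneg _)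

theorem subspaceDelta_le_one : subspaceDelta A B ≤ 1 :=
  subspaceDelta_le A B zero_le_one fun x _ hx1 => hx1 ▸ B.norm_sub_starProjection_le_norm x

theorem norm_sub_starProjection_le_subspaceDelta_mul {x : W} (hx : x ∈ A) :
    ‖x - B.starProjection x‖ ≤ subspaceDelta A B * ‖x‖ := by
  rcases eq_or_ne x 0 with rfl | hx0
  · simp
  have hpos : 0 < ‖x‖ := norm_pos_iff.2 hx0
  have key := norm_sub_starProjection_le_subspaceDelta A B (A.smul_mem ‖x‖⁻¹ hx)
    (by simp [norm_smul, hpos.ne'])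
  rw [map_smul, ← smul_sub, norm_smul, norm_inv, norm_norm, inv_mul_le_iff₀ hpos] at key
  rwa [mul_comm]

theorem one_sub_subspaceDelta_sq_mul_norm_sq_le {x : W} (hx : x ∈ A) :
    (1 - subspaceDelta A B ^ 2) * ‖x‖ ^ 2 ≤ ‖B.starProjection x‖ ^ 2 := by
  have h := pow_le_pow_left₀ (norm_nonneg _) (norm_sub_starProjection_le_subspaceDelta_mul A B hx) 2
  rw [mul_pow, B.norm_sub_starProjection_sq] at h
  linarith

end subspaceDelta

theorem subspaceDelta_le_of_finrank_eq {W : Type*} [NormedAddCommGroup W] [InnerProductSpace ℝ W]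
    (A B : Submodule ℝ W) [FiniteDimensional ℝ A] [FiniteDimensional ℝ B]
    (hdim : Module.finrank ℝ A = Module.finrank ℝ B) :
    subspaceDelta A B ≤ subspaceDelta B A := by
  set d := subspaceDelta B A
  have hd : 0 ≤ 1 - d ^ 2 := by nlinarith [subspaceDelta_nonneg B A, subspaceDelta_le_one B A]
  let T : B →L[ℝ] A := A.orthogonalProjectionOnto ∘L B.subtypeL
  have hT_adjoint : T.adjoint = B.orthogonalProjectionOnto ∘L A.subtypeL := by
    symm
    rw [ContinuousLinearMap.eq_adjoint_iff]
    intro x y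
    simp [T]
  have hT : ∀ y, √(1 - d ^ 2) * ‖y‖ ≤ ‖T y‖ := fun y => by
    rw [← pow_le_pow_iff_left₀ (by positivity) (norm_nonneg _) two_ne_zero, mul_pow,
      Real.sq_sqrt hd]
    exact one_sub_subspaceDelta_sq_mul_norm_sq_le B A y.2
  refine subspaceDelta_le A B (subspaceDelta_nonneg B A) fun x hx hx1 => ?_
  have hPx : √(1 - d ^ 2) ≤ ‖B.starProjection x‖ := by
    simpa [hT_adjoint, hx1] using T.mul_norm_le_norm_adjoint_apply hdim.symm hT ⟨x, hx⟩
  have hPx_sq := pow_le_pow_left₀ (Real.sqrt_nonneg _) hPx 2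
  rw [Real.sq_sqrt hd] at hPx_sq
  rw [← pow_le_pow_iff_left₀ (norm_nonneg _) (subspaceDelta_nonneg B A) two_ne_zero,
    B.norm_sub_starProjection_sq, hx1]
  linarith

theorem delta_symm_of_finrank_eq_general {W : Type*} [NormedAddCommGroup W] [InnerProductSpace ℝ W]
    (A B : Submodule ℝ W) [FiniteDimensional ℝ A] [FiniteDimensional ℝ B]
    (hdim : Module.finrank ℝ A = Module.finrank ℝ B) :
    subspaceDelta A B = subspaceDelta B A ∧
      max (subspaceDelta A B) (subspaceDelta B A) = subspaceDelta A B := by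
  have h := le_antisymm (subspaceDelta_le_of_finrank_eq A B hdim)
    (subspaceDelta_le_of_finrank_eq B A hdim.symm)
  exact ⟨h, by rw [h, max_self]⟩

/-- For finite-dimensional subspaces of equal dimension, `δ(A,B) = δ(B,A)`, and hence
`gap(A,B) = max(δ(A,B), δ(B,A)) = δ(A,B)`. -/
theorem delta_symm_of_finrank_eq {W : Type*} [NormedAddCommGroup W] [InnerProductSpace ℝ W]
    [CompleteSpace W] (A B : Submodule ℝ W) [FiniteDimensional ℝ A] [FiniteDimensional ℝ B]
    (hdim : Module.finrank ℝ A = Module.finrank ℝ B) :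
    subspaceDelta A B = subspaceDelta B A ∧
      max (subspaceDelta A B) (subspaceDelta B A) = subspaceDelta A B :=
  delta_symm_of_finrank_eq_general A B hdim
end

section
/- Let A and B be finite-dimensional subspaces of a Hilbert space with dim A = dim B. If δ(A,B) < 1, then the orthogonal projection P_B restricted to A maps A bijectively onto B. -/
open scoped InnerProductSpace

section

variable {W : Type*} [NormedAddCommGroup W] [InnerProductSpace ℝ W]

theorem norm_sub_orthogonalProjectionOnto_le (B : Submodule ℝ W) [B.HasOrthogonalProjection]
    (x : W) : ‖x - (B.orthogonalProjectionOnto x : W)‖ ≤ ‖x‖ :=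
  calc ‖x - (B.orthogonalProjectionOnto x : W)‖ = ‖Bᗮ.starProjection x‖ := by
        simp [Submodule.starProjection_orthogonal]
    _ ≤ ‖x‖ := by simpa using Bᗮ.starProjection.le_of_opNorm_le Bᗮ.starProjection_norm_le x

variable {A B : Submodule ℝ W} [B.HasOrthogonalProjection]

theorem norm_sub_orthogonalProjectionOnto_le_subspaceDelta {x : W} (hxA : x ∈ A) (hx : ‖x‖ = 1) :
    ‖x - (B.orthogonalProjectionOnto x : W)‖ ≤ subspaceDelta A B := by
  refine le_csSup ⟨1, ?_⟩ ⟨x, hxA, hx, rfl⟩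
  rintro r ⟨y, -, hy, rfl⟩
  exact hy ▸ norm_sub_orthogonalProjectionOnto_le B y

theorem eq_zero_of_orthogonalProjectionOnto_eq_zero (hlt : subspaceDelta A B < 1) {x : W}
    (hxA : x ∈ A) (hPx : B.orthogonalProjectionOnto x = 0) : x = 0 := by
  by_contra hx
  set u := ‖x‖⁻¹ • x
  have hu : ‖u‖ = 1 := norm_smul_inv_norm hx
  have hPu : B.orthogonalProjectionOnto u = 0 := by simp [u, hPx]
  have h1 : ‖u - (B.orthogonalProjectionOnto u : W)‖ = 1 := by
    rw [hPu, Submodule.coe_zero, sub_zero, hu]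
  have := norm_sub_orthogonalProjectionOnto_le_subspaceDelta (B := B) (A.smul_mem ‖x‖⁻¹ hxA) hu
  linarith

end

theorem projection_bijective_of_delta_lt_one_general {W : Type*} [NormedAddCommGroup W]
    [InnerProductSpace ℝ W] (A B : Submodule ℝ W)
    [FiniteDimensional ℝ A] [FiniteDimensional ℝ B]
    (hdim : Module.finrank ℝ A = Module.finrank ℝ B)
    (hlt : subspaceDelta A B < 1) :
    Function.Bijective (fun a : A => B.orthogonalProjectionOnto (a : W)) := by
  set f : A →ₗ[ℝ] B := B.orthogonalProjectionOnto.toLinearMap ∘ₗ A.subtype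
  have hinj : Function.Injective f := by
    rw [← LinearMap.ker_eq_bot, LinearMap.ker_eq_bot']
    exact fun a ha ↦ Subtype.ext (eq_zero_of_orthogonalProjectionOnto_eq_zero hlt a.2 ha)
  exact ⟨hinj, (LinearMap.injective_iff_surjective_of_finrank_eq_finrank hdim).mp hinj⟩

/-- If `A` and `B` are finite-dimensional subspaces of a Hilbert space of equal dimension
and `δ(A,B) < 1`, then the orthogonal projection `P_B` maps `A` bijectively onto `B`. -/
theorem projection_bijective_of_delta_lt_one {W : Type*} [NormedAddCommGroup W]
    [InnerProductSpace ℝ W] [CompleteSpace W] (A B : Submodule ℝ W)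
    [FiniteDimensional ℝ A] [FiniteDimensional ℝ B]
    (hdim : Module.finrank ℝ A = Module.finrank ℝ B)
    (hlt : subspaceDelta A B < 1) :
    Function.Bijective (fun a : A => B.orthogonalProjectionOnto (a : W)) :=
  projection_bijective_of_delta_lt_one_general A B hdim hlt
end

section
/- Let H and H_h be closed subspaces of a Hilbert space W, and let u_h ∈ W satisfy u_h ⊥ H_h. Then ‖P_H u_h‖ ≤ δ(H, H_h) · ‖u_h‖, where P_H is the orthogonal projection onto H and δ(H,H_h) = sup_{q ∈ H, ‖q‖=1} ‖q - P_{H_h} q‖. -/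
/-! With `p = P_H u`, one has `‖p‖² = ⟪p, u⟫ = ⟪p - P_{H_h} p, u⟫` because `u ⊥ H_h`, and by
homogeneity of the definition of `δ`, `‖p - P_{H_h} p‖ ≤ δ(H, H_h) ‖p‖`; Cauchy–Schwarz then gives
`‖p‖² ≤ δ(H, H_h) ‖p‖ ‖u‖`. -/

open scoped InnerProductSpace

theorem Submodule.norm_sub_starProjection_apply_le {𝕜 E : Type*} [RCLike 𝕜]
    [NormedAddCommGroup E] [InnerProductSpace 𝕜 E] (K : Submodule 𝕜 E)
    [K.HasOrthogonalProjection] (v : E) : ‖v - K.starProjection v‖ ≤ ‖v‖ := by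
  simpa [K.starProjection_orthogonal'] using Kᗮ.norm_starProjection_apply_le v

section

variable {W : Type*} [NormedAddCommGroup W] [InnerProductSpace ℝ W]
  (A B : Submodule ℝ W) [B.HasOrthogonalProjection]

theorem subspaceDelta_bddAbove :
    BddAbove {r : ℝ | ∃ x ∈ A, ‖x‖ = 1 ∧ r = ‖x - (B.orthogonalProjectionOnto x : W)‖} := by
  refine ⟨1, ?_⟩
  rintro r ⟨x, -, hx, rfl⟩
  exact hx ▸ B.norm_sub_starProjection_apply_le x

variable {A B}

theorem norm_sub_orthogonalProjectionOnto_le_subspaceDelta_mul_norm {x : W} (hx : x ∈ A) :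
    ‖x - (B.orthogonalProjectionOnto x : W)‖ ≤ subspaceDelta A B * ‖x‖ := by
  rcases eq_or_ne x 0 with rfl | hx0
  · simp
  have hnorm : 0 < ‖x‖ := norm_pos_iff.2 hx0
  set y : W := ‖x‖⁻¹ • x
  have hy : ‖y - (B.orthogonalProjectionOnto y : W)‖ =
      ‖x‖⁻¹ * ‖x - (B.orthogonalProjectionOnto x : W)‖ := by
    simp only [y, map_smul, Submodule.coe_smul, ← smul_sub, norm_smul, norm_inv, norm_norm]
  have hδ : ‖y - (B.orthogonalProjectionOnto y : W)‖ ≤ subspaceDelta A B :=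
    le_csSup (subspaceDelta_bddAbove A B)
      ⟨y, A.smul_mem _ hx, by simp [y, norm_smul, hnorm.ne'], rfl⟩
  rw [hy, inv_mul_le_iff₀ hnorm] at hδ
  linarith

theorem inner_le_subspaceDelta_mul_norm_mul_norm {x u : W} (hx : x ∈ A) (hu : u ∈ Bᗮ) :
    ⟪x, u⟫_ℝ ≤ subspaceDelta A B * ‖x‖ * ‖u‖ := by
  calc ⟪x, u⟫_ℝ = ⟪x - (B.orthogonalProjectionOnto x : W), u⟫_ℝ := by
        rw [inner_sub_left, B.inner_right_of_mem_orthogonal (B.orthogonalProjectionOnto x).2 hu,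
          sub_zero]
    _ ≤ ‖x - (B.orthogonalProjectionOnto x : W)‖ * ‖u‖ := real_inner_le_norm _ _
    _ ≤ subspaceDelta A B * ‖x‖ * ‖u‖ := by
      gcongr
      exact norm_sub_orthogonalProjectionOnto_le_subspaceDelta_mul_norm hx

end

theorem norm_projection_le_delta_mul_norm_general {W : Type*} [NormedAddCommGroup W]
    [InnerProductSpace ℝ W] (H Hh : Submodule ℝ W)
    [CompleteSpace H] [CompleteSpace Hh]
    (uh : W) (huh : ∀ v ∈ Hh, ⟪uh, v⟫_ℝ = 0) :
    ‖(H.orthogonalProjectionOnto uh : W)‖ ≤ subspaceDelta H Hh * ‖uh‖ := by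
  set p : W := (H.orthogonalProjectionOnto uh : W)
  have hp : ‖p‖ * ‖p‖ ≤ ‖p‖ * (subspaceDelta H Hh * ‖uh‖) := by
    calc ‖p‖ * ‖p‖ = ⟪p, uh⟫_ℝ := by
          have h := H.re_inner_starProjection_eq_normSq uh
          rw [RCLike.re_to_real, sq] at h
          exact h.symm
      _ ≤ subspaceDelta H Hh * ‖p‖ * ‖uh‖ :=
          inner_le_subspaceDelta_mul_norm_mul_norm (H.orthogonalProjectionOnto uh).2
            ((Hh.mem_orthogonal' uh).2 huh)
      _ = ‖p‖ * (subspaceDelta H Hh * ‖uh‖) := by ring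
  rcases (norm_nonneg p).eq_or_lt with hp0 | hp0
  · rw [← hp0]
    exact mul_nonneg (subspaceDelta_nonneg H Hh) (norm_nonneg uh)
  · exact le_of_mul_le_mul_left hp hp0

/-- If `u_h ⊥ H_h`, then `‖P_H u_h‖ ≤ δ(H, H_h) ‖u_h‖`. -/
theorem norm_projection_le_delta_mul_norm {W : Type*} [NormedAddCommGroup W]
    [InnerProductSpace ℝ W] [CompleteSpace W] (H Hh : Submodule ℝ W)
    [CompleteSpace H] [CompleteSpace Hh]
    (uh : W) (huh : ∀ v ∈ Hh, ⟪uh, v⟫_ℝ = 0) :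
    ‖(H.orthogonalProjectionOnto uh : W)‖ ≤ subspaceDelta H Hh * ‖uh‖ :=
  norm_projection_le_delta_mul_norm_general H Hh uh huh
end
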